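/- Let γ(t) = (r(t), y(t)), t ∈ (−ε, ε), be a geodesic of the pseudo-Riemannian metric g(r^{C₀}) = k r^{C₀−2} dr² + r^{C₀} g_Y on ℝ_{>0} × Y. Then: (1) t ↦ r(t) is a convex function if one of the following holds: C₀ = 0; or 0 < C₀ ≤ 2 and k·g_Y is positive definite; or C₀ < 0 and k·g_Y is negative definite. (2) t ↦ r(t) is a concave function if C₀ ≥ 2 and k·g_Y is negative definite. -/

import Mathlib

/-! STATEMENT 9: convexity/concavity of the radial part of geodesics of g(r^C₀). -/

noncomputable section

open Real Set Filter Topology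

variable {E : Type*} [NormedAddCommGroup E] [NormedSpace ℝ E]

/-- `g` is (pointwise) a pseudo-Riemannian metric on the chart domain `U`:
symmetric, bilinear and nondegenerate at every point of `U`. -/
def IsPseudoMetricOn (U : Set E) (g : E → E → E → ℝ) : Prop :=
  (∀ x ∈ U, ∀ u v, g x u v = g x v u) ∧
  (∀ x ∈ U, ∀ u, IsLinearMap ℝ (g x u)) ∧
  (∀ x ∈ U, ∀ u, (∀ v, g x u v = 0) → u = 0)

/-- `Γ` is the Levi-Civita connection of the metric `g` on the chart domain `U`
(`Γ x u v` are the Christoffel symbols): torsion-free, bilinear and compatible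
with the metric. -/
def IsLeviCivitaOn (U : Set E) (g : E → E → E → ℝ) (Γ : E → E → E → E) : Prop :=
  (∀ x ∈ U, ∀ u v, Γ x u v = Γ x v u) ∧
  (∀ x ∈ U, ∀ u, IsLinearMap ℝ (Γ x u)) ∧
  (∀ x ∈ U, ∀ u v w, fderiv ℝ (fun z => g z v w) x u
      = g x (Γ x u v) w + g x v (Γ x u w))

/-- The curvature tensor of the connection `Γ`, with the sign convention
`R(A,B) = [∇_A, ∇_B] − ∇_{[A,B]}`, evaluated in the chart on constant vector
fields (so that `[u,v] = 0`). -/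
def curvOf (Γ : E → E → E → E) (x u v w : E) : E :=
  fderiv ℝ (fun z => Γ z v w) x u - fderiv ℝ (fun z => Γ z u w) x v
    + Γ x u (Γ x v w) - Γ x v (Γ x u w)

/-- The sectional curvature `K^g` of the plane spanned by `u`, `v`. -/
def sectionalOf (g : E → E → E → ℝ) (Γ : E → E → E → E) (x u v : E) : ℝ :=
  g x (curvOf Γ x u v v) u / (g x u u * g x v v - g x u v ^ 2)

variable {F : Type*} [NormedAddCommGroup F] [NormedSpace ℝ F]

/-- The pseudo-Riemannian metric `g(r^{C₀}) = k r^{C₀−2} dr² + r^{C₀} g_Y`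
on `ℝ_{>0} × Y`. -/
noncomputable def powMetric (k C₀ : ℝ) (gY : F → F → F → ℝ)
    (p u v : ℝ × F) : ℝ :=
  k * p.1 ^ (C₀ - 2) * u.1 * v.1 + p.1 ^ C₀ * gY p.2 u.2 v.2

lemma gammaFst
    (Y : Set F) (hYopen : IsOpen Y)
    (gY : F → F → F → ℝ) (hgY : IsPseudoMetricOn Y gY)
    (hgYsm : ∀ u v, ContDiffOn ℝ (⊤ : ℕ∞) (fun y => gY y u v) Y)
    (k : ℝ) (hk : k ≠ 0) (C₀ : ℝ)
    (Γw : ℝ × F → ℝ × F → ℝ × F → ℝ × F)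
    (hΓw : IsLeviCivitaOn (Ioi 0 ×ˢ Y) (powMetric k C₀ gY) Γw)
    (x : ℝ × F) (hx1 : 0 < x.1) (hx2 : x.2 ∈ Y) (u : ℝ × F) :
    (Γw x u u).1 = (C₀ - 2) / (2 * x.1) * u.1 ^ 2
      - C₀ * x.1 / (2 * k) * gY x.2 u.2 u.2 := by
  have hxU : x ∈ Ioi (0:ℝ) ×ˢ Y := ⟨hx1, hx2⟩
  have hUopen : IsOpen ((Ioi (0:ℝ)) ×ˢ Y) := isOpen_Ioi.prod hYopen
  have hxne : x.1 ≠ 0 := hx1.ne'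
  have hgY0 : ∀ z ∈ Y, ∀ a : F, gY z a 0 = 0 := fun z hz a => (hgY.2.1 z hz a).map_zero
  -- derivative of z ↦ z.1 ^ p
  have hrpow : ∀ p : ℝ, HasFDerivAt (fun z : ℝ × F => z.1 ^ p)
      ((p * x.1 ^ (p - 1)) • ContinuousLinearMap.fst ℝ ℝ F) x := fun p =>
    (Real.hasDerivAt_rpow_const (p := p) (Or.inl hxne)).comp_hasFDerivAt x hasFDerivAt_fst
  -- Step A
  have hAfun : (fun z : ℝ × F => powMetric k C₀ gY z u ((1:ℝ), (0:F)))
      =ᶠ[𝓝 x] fun z => k * z.1 ^ (C₀ - 2) * u.1 := by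
    filter_upwards [hUopen.mem_nhds hxU] with z hz
    simp [powMetric, hgY0 z.2 hz.2]
  have hA : fderiv ℝ (fun z : ℝ × F => powMetric k C₀ gY z u ((1:ℝ), (0:F))) x u
      = k * ((C₀ - 2) * x.1 ^ (C₀ - 2 - 1)) * u.1 * u.1 := by
    rw [hAfun.fderiv_eq, (((hrpow (C₀ - 2)).const_mul k).mul_const u.1).fderiv]
    simp [ContinuousLinearMap.smul_apply]
    ring
  -- Step B
  have hψd : DifferentiableAt ℝ (fun w => gY w u.2 u.2) x.2 :=
    ((hgYsm u.2 u.2).contDiffAt (hYopen.mem_nhds hx2)).differentiableAt (by simp)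
  have hψ : HasFDerivAt (fun z : ℝ × F => gY z.2 u.2 u.2)
      ((fderiv ℝ (fun w => gY w u.2 u.2) x.2).comp (ContinuousLinearMap.snd ℝ ℝ F)) x :=
    hψd.hasFDerivAt.comp x hasFDerivAt_snd
  have hB : fderiv ℝ (fun z : ℝ × F => powMetric k C₀ gY z u u) x ((1:ℝ), (0:F))
      = k * ((C₀ - 2) * x.1 ^ (C₀ - 2 - 1)) * u.1 * u.1
        + C₀ * x.1 ^ (C₀ - 1) * gY x.2 u.2 u.2 := by
    have h2 : HasFDerivAt (fun z : ℝ × F => powMetric k C₀ gY z u u)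
        ((u.1 • (u.1 • (k • ((((C₀ - 2) * x.1 ^ (C₀ - 2 - 1))) • ContinuousLinearMap.fst ℝ ℝ F))))
          + ((x.1 ^ C₀) • ((fderiv ℝ (fun w => gY w u.2 u.2) x.2).comp (ContinuousLinearMap.snd ℝ ℝ F))
            + (gY x.2 u.2 u.2) • ((C₀ * x.1 ^ (C₀ - 1)) • ContinuousLinearMap.fst ℝ ℝ F))) x := by
      exact ((((hrpow (C₀ - 2)).const_mul k).mul_const u.1).mul_const u.1).add
        ((hrpow C₀).mul hψ)
    rw [h2.fderiv]
    simp [ContinuousLinearMap.smul_apply]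
    ring
  -- Koszul
  obtain ⟨hΓsym, hΓlin, compat⟩ := hΓw
  have c1 := compat x hxU u u ((1:ℝ), (0:F))
  have c2 := compat x hxU ((1:ℝ), (0:F)) u u
  have hgsym : ∀ a b : ℝ × F, powMetric k C₀ gY x a b = powMetric k C₀ gY x b a := fun a b => by
    simp only [powMetric, hgY.1 x.2 hx2 a.2 b.2]; ring
  rw [hΓsym x hxU ((1:ℝ), (0:F)) u, hgsym (Γw x u ((1:ℝ), (0:F))) u] at c2
  rw [hA] at c1
  rw [hB] at c2
  have ev1 : powMetric k C₀ gY x (Γw x u u) ((1:ℝ), (0:F))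
      = k * x.1 ^ (C₀ - 2) * (Γw x u u).1 := by
    simp [powMetric, hgY0 x.2 hx2]
  rw [ev1] at c1
  have key : k * x.1 ^ (C₀ - 2) * (Γw x u u).1
      = (k * ((C₀ - 2) * x.1 ^ (C₀ - 2 - 1)) * u.1 * u.1
          - C₀ * x.1 ^ (C₀ - 1) * gY x.2 u.2 u.2) / 2 := by
    linarith
  have hPpos : (0:ℝ) < x.1 ^ (C₀ - 2) := Real.rpow_pos_of_pos hx1 _
  have e3 : x.1 ^ (C₀ - 2 - 1) = x.1 ^ (C₀ - 2) / x.1 := by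
    rw [Real.rpow_sub hx1, Real.rpow_one]
  have e1 : x.1 ^ (C₀ - 1) = x.1 ^ (C₀ - 2) * x.1 := by
    rw [show C₀ - 1 = C₀ - 2 + 1 by ring, Real.rpow_add_one hxne]
  rw [e3, e1] at key
  field_simp at key ⊢
  nlinarith [key, hPpos, sq_nonneg u.1]

lemma hasDerivAt_fst' {f : ℝ → ℝ × F} {v : ℝ × F} {t : ℝ} (h : HasDerivAt f v t) :
    HasDerivAt (fun s => (f s).1) v.1 t := by
  simpa using (h.hasFDerivAt.fst).hasDerivAt

/-- Let `γ(t) = (r(t), y(t))`, `t ∈ (−ε, ε)`, be a geodesic of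
`g(r^{C₀}) = k r^{C₀−2} dr² + r^{C₀} g_Y` on `ℝ_{>0} × Y`.  Then
(1) `t ↦ r(t)` is convex if `C₀ = 0`, or `0 < C₀ ≤ 2` and `k·g_Y` is positive
definite, or `C₀ < 0` and `k·g_Y` is negative definite;
(2) `t ↦ r(t)` is concave if `C₀ ≥ 2` and `k·g_Y` is negative definite. -/
theorem statement_9
    (Y : Set F) (hYopen : IsOpen Y)
    (gY : F → F → F → ℝ) (hgY : IsPseudoMetricOn Y gY)
    (hgYsm : ∀ u v, ContDiffOn ℝ (⊤ : ℕ∞) (fun y => gY y u v) Y)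
    (k : ℝ) (hk : k ≠ 0) (C₀ : ℝ)
    -- the Levi-Civita connection of `g(r^{C₀})`
    (Γw : ℝ × F → ℝ × F → ℝ × F → ℝ × F)
    (hΓw : IsLeviCivitaOn (Ioi 0 ×ˢ Y) (powMetric k C₀ gY) Γw)
    (hΓwsm : ∀ u v, ContDiffOn ℝ (⊤ : ℕ∞) (fun p => Γw p u v) (Ioi 0 ×ˢ Y))
    -- the geodesic `γ = (r, y)` on `(−ε, ε)`
    (ε : ℝ) (hε : 0 < ε) (r : ℝ → ℝ) (y : ℝ → F)
    (hmem : ∀ t ∈ Ioo (-ε) ε, 0 < r t ∧ y t ∈ Y)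
    (hsm : ContDiffOn ℝ 2 (fun t => ((r t, y t) : ℝ × F)) (Ioo (-ε) ε))
    (hgeo : ∀ t ∈ Ioo (-ε) ε,
      deriv (deriv (fun t => ((r t, y t) : ℝ × F))) t
        + Γw (r t, y t)
            (deriv (fun t => ((r t, y t) : ℝ × F)) t)
            (deriv (fun t => ((r t, y t) : ℝ × F)) t)
        = 0) :
    -- (1) convexity
    ((C₀ = 0 ∨
        (0 < C₀ ∧ C₀ ≤ 2 ∧ ∀ y' ∈ Y, ∀ a : F, a ≠ 0 → 0 < k * gY y' a a) ∨
        (C₀ < 0 ∧ ∀ y' ∈ Y, ∀ a : F, a ≠ 0 → k * gY y' a a < 0)) →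
      ConvexOn ℝ (Ioo (-ε) ε) r) ∧
    -- (2) concavity
    ((2 ≤ C₀ ∧ ∀ y' ∈ Y, ∀ a : F, a ≠ 0 → k * gY y' a a < 0) →
      ConcaveOn ℝ (Ioo (-ε) ε) r) := by
  set f : ℝ → ℝ × F := fun t => ((r t, y t) : ℝ × F) with hf
  have hIoo : IsOpen (Ioo (-ε) ε) := isOpen_Ioo
  have hr2 : ContDiffOn ℝ 2 r (Ioo (-ε) ε) := hsm.fst
  have hfd : ∀ t ∈ Ioo (-ε) ε, DifferentiableAt ℝ f t := fun t ht =>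
    (hsm.contDiffAt (hIoo.mem_nhds ht)).differentiableAt two_ne_zero
  have hf'cd : ContDiffOn ℝ 1 (deriv f) (Ioo (-ε) ε) :=
    hsm.deriv_of_isOpen hIoo (by norm_num)
  have hf'd : ∀ t ∈ Ioo (-ε) ε, DifferentiableAt ℝ (deriv f) t := fun t ht =>
    (hf'cd.contDiffAt (hIoo.mem_nhds ht)).differentiableAt one_ne_zero
  have hrderiv : ∀ t ∈ Ioo (-ε) ε, deriv r t = (deriv f t).1 := fun t ht =>
    (hasDerivAt_fst' (hfd t ht).hasDerivAt).deriv
  have hr'' : ∀ t ∈ Ioo (-ε) ε, deriv (deriv r) t = (deriv (deriv f) t).1 := by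
    intro t ht
    have hev : deriv r =ᶠ[𝓝 t] fun s => (deriv f s).1 := by
      filter_upwards [hIoo.mem_nhds ht] with s hs
      exact hrderiv s hs
    rw [hev.deriv_eq]
    exact (hasDerivAt_fst' (hf'd t ht).hasDerivAt).deriv
  -- the key formula for the second derivative of r
  have hform : ∀ t ∈ Ioo (-ε) ε,
      deriv (deriv r) t = (2 - C₀) / (2 * r t) * (deriv r t) ^ 2
        + C₀ * r t / (2 * k ^ 2) * (k * gY (y t) ((deriv f t).2) ((deriv f t).2)) := by
    intro t ht
    obtain ⟨hrt, hyt⟩ := hmem t ht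
    have hgeq := hgeo t ht
    have h1 := congrArg Prod.fst hgeq
    simp only [Prod.fst_add, Prod.fst_zero] at h1
    have hg := gammaFst Y hYopen gY hgY hgYsm k hk C₀ Γw hΓw (r t, y t) hrt hyt (deriv f t)
    rw [hr'' t ht, hrderiv t ht]
    have h1' : (deriv (deriv f) t).1 + (Γw (r t, y t) (deriv f t) (deriv f t)).1 = 0 := h1
    rw [hg] at h1'
    have hrne : r t ≠ 0 := hrt.ne'
    field_simp at h1' ⊢
    linear_combination h1'
  refine ⟨?_, ?_⟩
  · -- convexity
    rintro hcase
    apply convexOn_of_deriv2_nonneg (convex_Ioo _ _) hr2.continuousOn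
    · rw [interior_Ioo]; exact hr2.differentiableOn two_ne_zero
    · rw [interior_Ioo]
      exact (hr2.deriv_of_isOpen (m := 1) hIoo (by norm_num)).differentiableOn one_ne_zero
    · rw [interior_Ioo]
      intro t ht
      have h2 : deriv^[2] r t = deriv (deriv r) t := rfl
      rw [h2, hform t ht]
      obtain ⟨hrt, hyt⟩ := hmem t ht
      set S := k * gY (y t) ((deriv f t).2) ((deriv f t).2) with hS
      have term1 : ∀ h2C : C₀ ≤ 2, 0 ≤ (2 - C₀) / (2 * r t) * (deriv r t) ^ 2 := fun h2C =>
        mul_nonneg (div_nonneg (by linarith) (by linarith)) (sq_nonneg _)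
      rcases hcase with h0 | ⟨hpos, hle, hdef⟩ | ⟨hneg, hdef⟩
      · subst h0
        have : (0:ℝ) * r t / (2 * k ^ 2) * S = 0 := by ring
        rw [this, add_zero]
        exact term1 (by norm_num)
      · have hSnn : 0 ≤ S := by
          by_cases hz : (deriv f t).2 = 0
          · rw [hS, hz, (hgY.2.1 (y t) hyt 0).map_zero]; simp
          · exact (hdef (y t) hyt _ hz).le
        have : 0 ≤ C₀ * r t / (2 * k ^ 2) * S :=
          mul_nonneg (div_nonneg (by positivity) (by positivity)) hSnn
        have := term1 hle
        linarith
      · have hSnp : S ≤ 0 := by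
          by_cases hz : (deriv f t).2 = 0
          · rw [hS, hz, (hgY.2.1 (y t) hyt 0).map_zero]; simp
          · exact (hdef (y t) hyt _ hz).le
        have hc : C₀ * r t / (2 * k ^ 2) ≤ 0 := by
          apply div_nonpos_of_nonpos_of_nonneg
          · nlinarith
          · positivity
        have : 0 ≤ C₀ * r t / (2 * k ^ 2) * S := by nlinarith [mul_nonneg (neg_nonneg.2 hc) (neg_nonneg.2 hSnp)]
        have := term1 (by linarith)
        linarith
  · -- concavity
    rintro ⟨hge, hdef⟩
    apply concaveOn_of_deriv2_nonpos (convex_Ioo _ _) hr2.continuousOn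
    · rw [interior_Ioo]; exact hr2.differentiableOn two_ne_zero
    · rw [interior_Ioo]
      exact (hr2.deriv_of_isOpen (m := 1) hIoo (by norm_num)).differentiableOn one_ne_zero
    · rw [interior_Ioo]
      intro t ht
      have h2 : deriv^[2] r t = deriv (deriv r) t := rfl
      rw [h2, hform t ht]
      obtain ⟨hrt, hyt⟩ := hmem t ht
      set S := k * gY (y t) ((deriv f t).2) ((deriv f t).2) with hS
      have hSnp : S ≤ 0 := by
        by_cases hz : (deriv f t).2 = 0
        · rw [hS, hz, (hgY.2.1 (y t) hyt 0).map_zero]; simp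
        · exact (hdef (y t) hyt _ hz).le
      have term1 : (2 - C₀) / (2 * r t) * (deriv r t) ^ 2 ≤ 0 := by
        apply mul_nonpos_of_nonpos_of_nonneg
        · apply div_nonpos_of_nonpos_of_nonneg <;> linarith
        · exact sq_nonneg _
      have term2 : C₀ * r t / (2 * k ^ 2) * S ≤ 0 := by
        apply mul_nonpos_of_nonneg_of_nonpos _ hSnp
        positivity
      linarith
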